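/- arXiv:1610.03523 — 5 statements merged into one kernel-verified Lean document; each statement's English description precedes it below -/
import Mathlib

section
/- Let V be a complex Hilbert space, Ω ⊆ ℝ^m open, and k ≥ 1 an integer. If P : Ω → End V is such that for every v, w ∈ V the function x ↦ ⟨P(x)v,w⟩ is of class C^k on Ω, then P is of class C^{k−1} as a map into (End V, ‖·‖_op). -/
/-!
The matrix coefficients `⟪w, P(·) v⟫` are `C¹`, hence Lipschitz on a compact ball around each
point; the difference quotients of `P` on that ball are then weakly bounded, so by the uniform
boundedness principle `P` is locally Lipschitz in operator norm, which settles `k = 1`. This also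
bounds the derivatives of the coefficients at `x` by `C ‖v‖ ‖w‖`, so the Riesz representation
turns them into a linear map `A x : ℝᵐ → End V` with `⟪w, A x u v⟫ = D⟪w, P(·) v⟫(x) u`.
For `k ≥ 2` each `x ↦ A x u` is weakly `C^{k-1}`, hence `C^{k-2}` in norm by induction; in
particular `A` is continuous, and the mean value inequality applied to each coefficient shows
that `A` is the Fréchet derivative of `P`, so `P` is `C^{k-1}`.
-/

open Complex Metric Filter Set

noncomputable section

open InnerProductSpace
open scoped InnerProduct Topology

section

variable {V : Type*} [NormedAddCommGroup V] [InnerProductSpace ℂ V]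

theorem norm_inner_apply_le (T : V →L[ℂ] V) (v w : V) : ‖⟪w, T v⟫_ℂ‖ ≤ ‖T‖ * ‖v‖ * ‖w‖ :=
  calc ‖⟪w, T v⟫_ℂ‖ ≤ ‖w‖ * ‖T v‖ := norm_inner_le_norm w (T v)
    _ ≤ ‖w‖ * (‖T‖ * ‖v‖) := by gcongr; exact T.le_opNorm v
    _ = ‖T‖ * ‖v‖ * ‖w‖ := by ring

theorem opNorm_le_of_norm_inner_le {T : V →L[ℂ] V} {M : ℝ} (hM : 0 ≤ M)
    (h : ∀ v w, ‖⟪w, T v⟫_ℂ‖ ≤ M * ‖v‖ * ‖w‖) : ‖T‖ ≤ M :=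
  T.opNorm_le_bound hM fun v => by
    rw [← innerSL_apply_norm ℂ]
    exact ContinuousLinearMap.opNorm_le_bound _ (by positivity) fun w => by
      simpa [norm_inner_symm] using h v w

variable {E : Type*} [NormedAddCommGroup E] [NormedSpace ℝ E]

theorem norm_fderiv_inner_le {P : E → V →L[ℂ] V} {x : E} {t : Set E} (ht : t ∈ 𝓝 x)
    {K : NNReal} (hK : LipschitzOnWith K P t) (v w : V) :
    ‖fderiv ℝ (fun y => ⟪w, P y v⟫_ℂ) x‖ ≤ K * ‖v‖ * ‖w‖ :=
  norm_fderiv_le_of_lip' ℝ (by positivity) <| by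
    filter_upwards [ht] with y hy
    rw [← inner_sub_right, ← sub_apply]
    calc _ ≤ ‖P y - P x‖ * ‖v‖ * ‖w‖ := norm_inner_apply_le _ v w
      _ ≤ K * ‖y - x‖ * ‖v‖ * ‖w‖ := by gcongr; exact hK.norm_sub_le hy (mem_of_mem_nhds ht)
      _ = K * ‖v‖ * ‖w‖ * ‖y - x‖ := by ring

theorem exists_sesqForm_eq_fderiv_inner {P : E → V →L[ℂ] V} {x : E}
    (hd : ∀ v w, DifferentiableAt ℝ (fun y => ⟪w, P y v⟫_ℂ) x) {C : ℝ}
    (hC : ∀ v w, ‖fderiv ℝ (fun y => ⟪w, P y v⟫_ℂ) x‖ ≤ C * ‖v‖ * ‖w‖) (u : E) :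
    ∃ B : V →L⋆[ℂ] V →L[ℂ] ℂ, ∀ w v, B w v = fderiv ℝ (fun y => ⟪w, P y v⟫_ℂ) x u := by
  let f : V → V → E → ℂ := fun w v y => ⟪w, P y v⟫_ℂ
  refine ⟨(LinearMap.mk₂'ₛₗ (starRingEnd ℂ) (RingHom.id ℂ) (fun w v => fderiv ℝ (f w v) x u)
    ?_ ?_ ?_ ?_).mkContinuous₂ (C * ‖u‖) ?_, fun _ _ => rfl⟩
  · intro w w' v
    rw [show f (w + w') v = f w v + f w' v from funext fun y => inner_add_left _ _ _,
      fderiv_add (hd v w) (hd v w')]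
    rfl
  · intro c w v
    rw [show f (c • w) v = starRingEnd ℂ c • f w v from funext fun y => inner_smul_left _ _ _,
      fderiv_const_smul (hd v w)]
    rfl
  · intro w v v'
    rw [show f w (v + v') = f w v + f w v' from
        funext fun y => by simp only [f, map_add, inner_add_right, Pi.add_apply],
      fderiv_add (hd v w) (hd v' w)]
    rfl
  · intro c w v
    rw [show f w (c • v) = c • f w v from
        funext fun y => by simp only [f, map_smul, inner_smul_right, Pi.smul_apply, smul_eq_mul],
      fderiv_const_smul (hd v w)]
    rfl
  · intro w v
    calc ‖fderiv ℝ (f w v) x u‖ ≤ ‖fderiv ℝ (f w v) x‖ * ‖u‖ := (fderiv ℝ (f w v) x).le_opNorm u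
      _ ≤ C * ‖v‖ * ‖w‖ * ‖u‖ := by gcongr; exact hC v w
      _ = C * ‖u‖ * ‖w‖ * ‖v‖ := by ring

theorem hasFDerivAt_of_inner {Ω : Set E} (hΩ : IsOpen Ω) {P : E → V →L[ℂ] V}
    {A : E → E →L[ℝ] V →L[ℂ] V} (hP : ∀ v w, DifferentiableOn ℝ (fun y => ⟪w, P y v⟫_ℂ) Ω)
    (hA : ∀ z ∈ Ω, ∀ u v w, ⟪w, A z u v⟫_ℂ = fderiv ℝ (fun y => ⟪w, P y v⟫_ℂ) z u)
    {x : E} (hx : x ∈ Ω) (hAx : ContinuousAt A x) : HasFDerivAt P (A x) x := by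
  rw [hasFDerivAt_iff_isLittleO, Asymptotics.isLittleO_iff]
  intro c hc
  obtain ⟨δ, hδ, hδA, hδΩ⟩ : ∃ δ > 0, (∀ z ∈ ball x δ, ‖A z - A x‖ ≤ c) ∧ ball x δ ⊆ Ω := by
    obtain ⟨δ, hδ, hδs⟩ := Metric.mem_nhds_iff.1
      (inter_mem (hAx.eventually (closedBall_mem_nhds (A x) hc)) (hΩ.mem_nhds hx))
    exact ⟨δ, hδ, fun z hz => (dist_eq_norm (A z) (A x) ▸ (hδs hz).1), fun z hz => (hδs hz).2⟩
  filter_upwards [ball_mem_nhds x hδ] with y hy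
  refine opNorm_le_of_norm_inner_le (by positivity) fun v w => ?_
  have hfderiv : ∀ z ∈ ball x δ,
      ‖fderiv ℝ (fun y => ⟪w, P y v⟫_ℂ) z - fderiv ℝ (fun y => ⟪w, P y v⟫_ℂ) x‖ ≤
        c * ‖v‖ * ‖w‖ := fun z hz =>
    ContinuousLinearMap.opNorm_le_bound _ (by positivity) fun u => by
      rw [sub_apply, ← hA z (hδΩ hz), ← hA x hx, ← inner_sub_right,
        ← sub_apply, ← sub_apply]
      calc _ ≤ ‖(A z - A x) u‖ * ‖v‖ * ‖w‖ := norm_inner_apply_le _ v w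
        _ ≤ (c * ‖u‖) * ‖v‖ * ‖w‖ := by
          gcongr; exact ((A z - A x).le_opNorm u).trans (by gcongr; exact hδA z hz)
        _ = c * ‖v‖ * ‖w‖ * ‖u‖ := by ring
  have hmvt := (convex_ball x δ).norm_image_sub_le_of_norm_fderiv_le'
    (fun z hz => (hP v w).differentiableAt (hΩ.mem_nhds (hδΩ hz))) hfderiv (mem_ball_self hδ) hy
  rw [← hA x hx] at hmvt
  simpa only [sub_apply, inner_sub_right, mul_right_comm _ ‖y - x‖] using hmvt

end

variable {V : Type*} [NormedAddCommGroup V] [InnerProductSpace ℂ V] [CompleteSpace V]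

theorem exists_opNorm_le_of_forall_inner_bounded {ι : Type*} (T : ι → V →L[ℂ] V)
    (h : ∀ v w, ∃ C, ∀ i, ‖⟪w, T i v⟫_ℂ‖ ≤ C) : ∃ C, ∀ i, ‖T i‖ ≤ C := by
  refine banach_steinhaus fun v => ?_
  obtain ⟨C, hC⟩ := banach_steinhaus (g := fun i => innerSL ℂ (T i v)) fun w => by
    obtain ⟨C, hC⟩ := h v w
    exact ⟨C, fun i => by simpa [norm_inner_symm] using hC i⟩
  exact ⟨C, fun i => by simpa [innerSL_apply_norm] using hC i⟩

theorem exists_lipschitzOnWith_of_inner {α : Type*} [MetricSpace α] {P : α → V →L[ℂ] V}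
    {s : Set α} (h : ∀ v w, ∃ K, LipschitzOnWith K (fun x => ⟪w, P x v⟫_ℂ) s) :
    ∃ K, LipschitzOnWith K P s := by
  let T : s × s → V →L[ℂ] V := fun p => ((dist (p.1 : α) p.2)⁻¹ : ℂ) • (P p.1 - P p.2)
  obtain ⟨C, hC⟩ := exists_opNorm_le_of_forall_inner_bounded T fun v w => by
    obtain ⟨K, hK⟩ := h v w
    refine ⟨K, fun ⟨⟨x, hx⟩, ⟨y, hy⟩⟩ => ?_⟩
    have hxy : ‖⟪w, P x v⟫_ℂ - ⟪w, P y v⟫_ℂ‖ ≤ K * dist x y := by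
      simpa [dist_eq_norm] using hK.dist_le_mul x hx y hy
    rcases eq_or_ne x y with rfl | hne
    · simp [T]
    · simp only [T, smul_apply, sub_apply, inner_smul_right,
        inner_sub_right, norm_mul, norm_inv, Complex.norm_real, Real.norm_eq_abs, abs_dist]
      rwa [inv_mul_le_iff₀ (dist_pos.2 hne), mul_comm]
  refine ⟨C.toNNReal, LipschitzOnWith.of_dist_le' fun x hx y hy => ?_⟩
  rcases eq_or_ne x y with rfl | hne
  · simp
  · have := hC (⟨x, hx⟩, ⟨y, hy⟩)
    simp only [T, norm_smul, norm_inv, Complex.norm_real, Real.norm_eq_abs, abs_dist] at this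
    rwa [dist_eq_norm, mul_comm, ← inv_mul_le_iff₀ (dist_pos.2 hne)]

variable {E : Type*} [NormedAddCommGroup E] [NormedSpace ℝ E]

theorem locallyLipschitzOn_of_contDiffOn_inner [ProperSpace E] {Ω : Set E} (hΩ : IsOpen Ω)
    {P : E → V →L[ℂ] V} (hP : ∀ v w, ContDiffOn ℝ 1 (fun x => ⟪w, P x v⟫_ℂ) Ω) :
    LocallyLipschitzOn Ω P := by
  intro x hx
  -- the ball must not depend on `v, w`; compactness makes every coefficient Lipschitz on it
  obtain ⟨r, hr, hrΩ⟩ := nhds_basis_closedBall.mem_iff.1 (hΩ.mem_nhds hx)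
  obtain ⟨K, hK⟩ := exists_lipschitzOnWith_of_inner fun v w =>
    ((hP v w).mono hrΩ).exists_lipschitzOnWith one_ne_zero (convex_closedBall x r)
      (isCompact_closedBall x r)
  exact ⟨K, closedBall x r, mem_nhdsWithin_of_mem_nhds (closedBall_mem_nhds x hr), hK⟩

theorem exists_clm_inner_eq_fderiv [FiniteDimensional ℝ E] {P : E → V →L[ℂ] V} {x : E}
    (hd : ∀ v w, DifferentiableAt ℝ (fun y => ⟪w, P y v⟫_ℂ) x) {C : ℝ}
    (hC : ∀ v w, ‖fderiv ℝ (fun y => ⟪w, P y v⟫_ℂ) x‖ ≤ C * ‖v‖ * ‖w‖) :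
    ∃ A : E →L[ℝ] V →L[ℂ] V, ∀ u v w, ⟪w, A u v⟫_ℂ = fderiv ℝ (fun y => ⟪w, P y v⟫_ℂ) x u := by
  choose B hB using exists_sesqForm_eq_fderiv_inner hd hC
  let T : E → V →L[ℂ] V := fun u => (continuousLinearMapOfBilin (B u))†
  have hT : ∀ u v w, ⟪w, T u v⟫_ℂ = fderiv ℝ (fun y => ⟪w, P y v⟫_ℂ) x u := fun u v w => by
    rw [ContinuousLinearMap.adjoint_inner_right, continuousLinearMapOfBilin_apply, hB]
  let A : E →ₗ[ℝ] V →L[ℂ] V :=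
    { toFun := T
      map_add' := fun u u' => by
        ext v; refine ext_inner_left ℂ fun w => ?_
        simp [hT, inner_add_right]
      map_smul' := fun c u => by
        ext v; refine ext_inner_left ℂ fun w => ?_
        simp [hT, inner_smul_right_eq_smul] }
  exact ⟨LinearMap.toContinuousLinearMap A, hT⟩

theorem exists_clm_inner_eq_fderiv_on [FiniteDimensional ℝ E] {Ω : Set E} (hΩ : IsOpen Ω)
    {P : E → V →L[ℂ] V} (hP : ∀ v w, ContDiffOn ℝ 1 (fun x => ⟪w, P x v⟫_ℂ) Ω) :
    ∃ A : E → E →L[ℝ] V →L[ℂ] V, ∀ x ∈ Ω, ∀ u v w,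
      ⟪w, A x u v⟫_ℂ = fderiv ℝ (fun y => ⟪w, P y v⟫_ℂ) x u := by
  have : ∀ x ∈ Ω, ∃ A : E →L[ℝ] V →L[ℂ] V, ∀ u v w,
      ⟪w, A u v⟫_ℂ = fderiv ℝ (fun y => ⟪w, P y v⟫_ℂ) x u := fun x hx => by
    obtain ⟨K, t, ht, hK⟩ := locallyLipschitzOn_of_contDiffOn_inner hΩ hP hx
    rw [hΩ.nhdsWithin_eq hx] at ht
    exact exists_clm_inner_eq_fderiv
      (fun v w => ((hP v w).differentiableOn one_ne_zero).differentiableAt (hΩ.mem_nhds hx))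
      (norm_fderiv_inner_le ht hK)
  choose! A hA using this
  exact ⟨A, hA⟩

theorem contDiffOn_of_contDiffOn_inner [FiniteDimensional ℝ E] {Ω : Set E} (hΩ : IsOpen Ω)
    (n : ℕ) {P : E → V →L[ℂ] V} (hP : ∀ v w, ContDiffOn ℝ (n + 1) (fun x => ⟪w, P x v⟫_ℂ) Ω) :
    ContDiffOn ℝ n P Ω := by
  induction n generalizing P with
  | zero =>
    simpa using (locallyLipschitzOn_of_contDiffOn_inner hΩ (by simpa using hP)).continuousOn
  | succ n ih =>
    have hP1 : ∀ v w, ContDiffOn ℝ 1 (fun x => ⟪w, P x v⟫_ℂ) Ω := fun v w =>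
      (hP v w).of_le (by norm_cast; omega)
    obtain ⟨A, hA⟩ := exists_clm_inner_eq_fderiv_on hΩ hP1
    have hA_contDiff : ContDiffOn ℝ n A Ω := contDiffOn_clm_apply.2 fun u => ih fun v w =>
      (((hP v w).fderiv_of_isOpen hΩ le_rfl).clm_apply contDiffOn_const).congr
        fun x hx => hA x hx u v w
    have hPA : ∀ x ∈ Ω, HasFDerivAt P (A x) x := fun x hx =>
      hasFDerivAt_of_inner hΩ (fun v w => (hP1 v w).differentiableOn one_ne_zero) hA hx
        (hA_contDiff.continuousOn.continuousAt (hΩ.mem_nhds hx))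
    rw [Nat.cast_succ, contDiffOn_succ_iff_fderiv_of_isOpen hΩ]
    exact ⟨fun x hx => (hPA x hx).differentiableAt.differentiableWithinAt, by simp,
      hA_contDiff.congr fun x hx => (hPA x hx).fderiv⟩

/-- Proposition 2.3: a weakly `C^k` operator-valued map is
`C^{k-1}` in the operator norm topology. -/
theorem weak_Ck_implies_op_Ck_sub_one
    {m : ℕ} (Ω : Set (EuclideanSpace ℝ (Fin m))) (hΩ : IsOpen Ω)
    (k : ℕ) (hk : 1 ≤ k)
    (P : EuclideanSpace ℝ (Fin m) → (V →L[ℂ] V))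
    (hP : ∀ v w : V, ContDiffOn ℝ (k : ℕ∞) (fun x => (inner ℂ w (P x v) : ℂ)) Ω) :
    ContDiffOn ℝ ((k - 1 : ℕ) : ℕ∞) P Ω := by
  obtain ⟨n, rfl⟩ := Nat.exists_eq_add_of_le' hk
  simpa using contDiffOn_of_contDiffOn_inner hΩ n (by simpa using hP)
end
end

section
/- Let V be a complex Hilbert space and Ω ⊆ ℝ^m open. Suppose P : Ω → End V takes self-adjoint values, is bounded below (there is c ∈ ℝ with ⟨P(x)v,v⟩ ≥ c‖v‖² for all x ∈ Ω, v ∈ V), and is weakly upper semicontinuous (for every v ∈ V the function x ↦ ⟨P(x)v,v⟩ is upper semicontinuous). Then for every continuous φ : Ω → V the function x ↦ ⟨P(x)φ(x),φ(x)⟩ is upper semicontinuous on Ω. -/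
open Complex Metric Filter Set

noncomputable section

variable {V : Type*} [NormedAddCommGroup V] [InnerProductSpace ℂ V] [CompleteSpace V]

/-!
Over a compact neighbourhood `K` of a point `x₀`, the quadratic forms `⟨P(x)v, v⟩` are bounded
for each fixed `v`: from below by `c‖v‖²`, from above by upper semicontinuity. Polarization and two applications of the uniform boundedness principle turn this
into a bound `‖P(x)‖ ≤ C` for `x ∈ K`. Then
`⟨P(x)φ(x), φ(x)⟩ ≤ ⟨P(x)φ(x₀), φ(x₀)⟩ + C (‖φ(x)‖ + ‖φ(x₀)‖) ‖φ(x) - φ(x₀)‖` on `K`,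
and the right-hand side is upper semicontinuous at `x₀` with the same value there.
-/

open scoped InnerProductSpace Topology

theorem UpperSemicontinuousWithinAt.of_eventuallyLE {α β : Type*} [TopologicalSpace α]
    [Preorder β] {f g : α → β} {s : Set α} {x : α} (hg : UpperSemicontinuousWithinAt g s x)
    (hfg : f ≤ᶠ[𝓝[s] x] g) (hx : g x ≤ f x) : UpperSemicontinuousWithinAt f s x := by
  intro y hy
  filter_upwards [hg y (hx.trans_lt hy), hfg] with z hgz hfz
  exact hfz.trans_lt hgz

namespace ContinuousLinearMap

variable {E : Type*}

theorem abs_re_inner_apply_le [SeminormedAddCommGroup E] [InnerProductSpace ℂ E]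
    (T : E →L[ℂ] E) (u w : E) : |(⟪T u, w⟫_ℂ).re| ≤ ‖T‖ * ‖u‖ * ‖w‖ :=
  calc |(⟪T u, w⟫_ℂ).re| ≤ ‖T u‖ * ‖w‖ := (abs_re_le_norm _).trans (norm_inner_le_norm _ _)
    _ ≤ ‖T‖ * ‖u‖ * ‖w‖ := by gcongr; exact T.le_opNorm u

theorem abs_reApplyInnerSelf_sub_le [SeminormedAddCommGroup E] [InnerProductSpace ℂ E]
    (T : E →L[ℂ] E) (a b : E) :
    |T.reApplyInnerSelf a - T.reApplyInnerSelf b| ≤ ‖T‖ * (‖a‖ + ‖b‖) * ‖a - b‖ := by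
  have hsplit : T.reApplyInnerSelf a - T.reApplyInnerSelf b
      = (⟪T a, a - b⟫_ℂ).re + (⟪T (a - b), b⟫_ℂ).re := by
    simp only [reApplyInnerSelf_apply, map_sub, inner_sub_left, inner_sub_right,
      RCLike.re_to_complex, Complex.sub_re]
    ring
  calc |T.reApplyInnerSelf a - T.reApplyInnerSelf b|
      ≤ |(⟪T a, a - b⟫_ℂ).re| + |(⟪T (a - b), b⟫_ℂ).re| := hsplit ▸ abs_add_le _ _
    _ ≤ ‖T‖ * ‖a‖ * ‖a - b‖ + ‖T‖ * ‖a - b‖ * ‖b‖ :=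
        add_le_add (T.abs_re_inner_apply_le _ _) (T.abs_re_inner_apply_le _ _)
    _ = ‖T‖ * (‖a‖ + ‖b‖) * ‖a - b‖ := by ring

theorem exists_norm_le_of_abs_reApplyInnerSelf_le [NormedAddCommGroup E] [InnerProductSpace ℂ E]
    [CompleteSpace E] {ι : Type*} {T : ι → E →L[ℂ] E} (hT : ∀ i, IsSelfAdjoint (T i))
    (hbdd : ∀ v, ∃ C, ∀ i, |(T i).reApplyInnerSelf v| ≤ C) : ∃ C, ∀ i, ‖T i‖ ≤ C := by
  have hdiag : ∀ v, ∃ C, ∀ i, ‖⟪T i v, v⟫_ℂ‖ ≤ C := fun v =>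
    (hbdd v).imp fun C hC i => by
      rw [← (hT i).isSymmetric.coe_reApplyInnerSelf_apply, RCLike.norm_ofReal]
      exact hC i
  have hform : ∀ v w, ∃ C, ∀ i, ‖⟪T i v, w⟫_ℂ‖ ≤ C := by
    intro v w
    obtain ⟨C₁, h₁⟩ := hdiag (v + w)
    obtain ⟨C₂, h₂⟩ := hdiag (v - w)
    obtain ⟨C₃, h₃⟩ := hdiag (v + I • w)
    obtain ⟨C₄, h₄⟩ := hdiag (v - I • w)
    refine ⟨(C₁ + C₂ + C₃ + C₄) / 4, fun i => ?_⟩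
    rw [← coe_coe, inner_map_polarization', norm_div, RCLike.norm_ofNat]
    gcongr
    refine (norm_add_le _ _).trans (add_le_add ((norm_sub_le _ _).trans
      (add_le_add ((norm_sub_le _ _).trans (add_le_add (h₁ i) (h₂ i))) ?_)) ?_)
    · simpa only [coe_coe, norm_mul, norm_I, one_mul] using h₃ i
    · simpa only [coe_coe, norm_mul, norm_I, one_mul] using h₄ i
  have hvec : ∀ v, ∃ C, ∀ i, ‖T i v‖ ≤ C := fun v => by
    obtain ⟨C, hC⟩ := banach_steinhaus (g := fun i => innerSL ℂ (T i v)) (hform v)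
    exact ⟨C, fun i => innerSL_apply_norm ℂ (T i v) ▸ hC i⟩
  exact banach_steinhaus hvec

end ContinuousLinearMap

theorem eventually_norm_le_of_upperSemicontinuousOn_reApplyInnerSelf {X : Type*}
    [TopologicalSpace X] [LocallyCompactSpace X] {Ω : Set X} (hΩ : IsOpen Ω) {P : X → V →L[ℂ] V}
    (hsa : ∀ x ∈ Ω, IsSelfAdjoint (P x))
    (hbdd : ∃ c : ℝ, ∀ x ∈ Ω, ∀ v : V, c * ‖v‖ ^ 2 ≤ (P x).reApplyInnerSelf v)
    (husc : ∀ v : V, UpperSemicontinuousOn (fun x => (P x).reApplyInnerSelf v) Ω)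
    {x₀ : X} (hx₀ : x₀ ∈ Ω) : ∃ C, ∀ᶠ x in 𝓝 x₀, ‖P x‖ ≤ C := by
  obtain ⟨c, hc⟩ := hbdd
  obtain ⟨K, hK, hKΩ, hKc⟩ := local_compact_nhds (hΩ.mem_nhds hx₀)
  have hquad : ∀ v, ∃ C, ∀ x : K, |(P x).reApplyInnerSelf v| ≤ C := fun v => by
    obtain ⟨M, hM⟩ := ((husc v).mono hKΩ).bddAbove_of_isCompact hKc
    exact ⟨max |c * ‖v‖ ^ 2| |M|, fun x =>
      abs_le_max_abs_abs (hc x (hKΩ x.2) v) (hM (mem_image_of_mem _ x.2))⟩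
  obtain ⟨C, hC⟩ := ContinuousLinearMap.exists_norm_le_of_abs_reApplyInnerSelf_le
    (T := fun x : K => P x) (fun x => hsa x (hKΩ x.2)) hquad
  exact ⟨C, eventually_of_mem hK fun x hx => hC ⟨x, hx⟩⟩

/-- Proposition 2.4: if `P` is self-adjoint valued, bounded below,
and weakly upper semicontinuous, then `x ↦ ⟨P(x)φ(x), φ(x)⟩` is upper
semicontinuous for every continuous `φ`. -/
theorem weakly_usc_apply_continuous
    {m : ℕ} (Ω : Set (EuclideanSpace ℝ (Fin m))) (hΩ : IsOpen Ω)
    (P : EuclideanSpace ℝ (Fin m) → (V →L[ℂ] V))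
    (hsa : ∀ x ∈ Ω, IsSelfAdjoint (P x))
    (hbdd : ∃ c : ℝ, ∀ x ∈ Ω, ∀ v : V, c * ‖v‖ ^ 2 ≤ (P x).reApplyInnerSelf v)
    (husc : ∀ v : V, UpperSemicontinuousOn (fun x => (P x).reApplyInnerSelf v) Ω)
    (φ : EuclideanSpace ℝ (Fin m) → V) (hφ : ContinuousOn φ Ω) :
    UpperSemicontinuousOn (fun x => (P x).reApplyInnerSelf (φ x)) Ω := by
  intro x₀ hx₀
  obtain ⟨C, hC⟩ :=
    eventually_norm_le_of_upperSemicontinuousOn_reApplyInnerSelf hΩ hsa hbdd husc hx₀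
  have hmain : UpperSemicontinuousWithinAt (fun x => (P x).reApplyInnerSelf (φ x₀)) Ω x₀ :=
    husc (φ x₀) x₀ hx₀
  have herror : ContinuousWithinAt (fun x => C * (‖φ x‖ + ‖φ x₀‖) * ‖φ x - φ x₀‖) Ω x₀ :=
    (continuousWithinAt_const.mul ((hφ x₀ hx₀).norm.add continuousWithinAt_const)).mul
      ((hφ x₀ hx₀).sub continuousWithinAt_const).norm
  refine (hmain.add herror.upperSemicontinuousWithinAt).of_eventuallyLE ?_ (by simp)
  filter_upwards [nhdsWithin_le_nhds hC] with x hx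
  calc (P x).reApplyInnerSelf (φ x)
      ≤ (P x).reApplyInnerSelf (φ x₀) + ‖P x‖ * (‖φ x‖ + ‖φ x₀‖) * ‖φ x - φ x₀‖ := by
        linarith [(abs_le.1 ((P x).abs_reApplyInnerSelf_sub_le (φ x) (φ x₀))).2]
    _ ≤ (P x).reApplyInnerSelf (φ x₀) + C * (‖φ x‖ + ‖φ x₀‖) * ‖φ x - φ x₀‖ := by gcongr
end
end

section
/- Let V be a complex Hilbert space, Ω = {z ∈ ℂ : |z| < 1}, and let H, K : Ω → GL(V) be holomorphic maps such that both z ↦ H(z)*H(z) and z ↦ K(z)*K(z) extend to maps Ω̄ → End⁺V continuous in the operator norm. If H(z)*H(z) ≥ K(z)*K(z) for all z ∈ ∂Ω (for the boundary extensions), then H(z)*H(z) ≥ K(z)*K(z) for all z ∈ Ω. -/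
open Complex Metric Filter Set

noncomputable section

variable {V : Type*} [NormedAddCommGroup V] [InnerProductSpace ℂ V] [CompleteSpace V]

/-- Loewner order on operators: `opLE S T` means `S ≤ T`. -/
def opLE (S T : V →L[ℂ] V) : Prop := ∀ v : V, 0 ≤ (T - S).reApplyInnerSelf v

/-- `End⁺V`: self-adjoint positive invertible operators. -/
def IsPosInv (P : V →L[ℂ] V) : Prop :=
  IsSelfAdjoint P ∧ ∃ ε : ℝ, 0 < ε ∧ ∀ v : V, ε * ‖v‖ ^ 2 ≤ P.reApplyInnerSelf v

/-!
Put `F = K H⁻¹`, holomorphic on the disc. For `z` in the disc, `‖F z‖ ≤ c` amounts to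
`K(z)*K(z) ≤ c² H(z)*H(z)`, a condition on the extensions `PK z`, `PH z` alone. On the circle it
holds with `c = 1`; since `PH` is coercive there and both extensions are continuous, it holds
with any `c > 1` near each boundary point. The maximum modulus principle, applied to the open set
where `‖F‖ > c` (whose closure stays inside the disc), then gives `‖F‖ ≤ c` on the whole disc.
-/

open Topology

namespace Complex

theorem norm_le_of_eventually_norm_le_near_frontier {E F : Type*} [NormedAddCommGroup E]
    [NormedSpace ℂ E] [Nontrivial E] [NormedAddCommGroup F] [NormedSpace ℂ F] {f : E → F}
    {U : Set E} {C : ℝ}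
    (hUb : Bornology.IsBounded U) (hUo : IsOpen U) (hf : DifferentiableOn ℂ f U)
    (hC : ∀ ζ ∈ frontier U, ∀ᶠ z in 𝓝 ζ, z ∈ U → ‖f z‖ ≤ C) {z : E} (hz : z ∈ U) :
    ‖f z‖ ≤ C := by
  obtain ⟨N, hNo, hfrN, hN⟩ := eventually_nhdsSet_iff_exists.1 (eventually_nhdsSet_iff_forall.2 hC)
  rcases le_or_gt ‖f z‖ C with hzC | hzC
  · exact hzC
  set W := U ∩ (‖f ·‖) ⁻¹' Ioi C
  have hWo : IsOpen W := hf.continuousOn.norm.isOpen_inter_preimage hUo isOpen_Ioi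
  have hWN : W ⊆ Nᶜ := fun w hw hwN => (hN w hwN hw.1).not_gt hw.2
  have hclW : closure W ⊆ U := by
    intro w hw
    by_contra hwU
    have hw' : w ∈ frontier U := hUo.frontier_eq ▸ ⟨closure_mono inter_subset_left hw, hwU⟩
    exact closure_minimal hWN hNo.isClosed_compl hw (hfrN hw')
  refine norm_le_of_forall_mem_frontier_norm_le (hUb.subset inter_subset_left)
    (hf.mono hclW).diffContOnCl (fun w hw => ?_) (subset_closure ⟨hz, hzC⟩)
  rw [hWo.frontier_eq] at hw
  exact not_lt.1 fun h => hw.2 ⟨hclW hw.1, h⟩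

end Complex

namespace ContinuousLinearMap

theorem reApplyInnerSelf_sub {E : Type*} [NormedAddCommGroup E] [InnerProductSpace ℂ E]
    (A B : E →L[ℂ] E) (v : E) :
    (A - B).reApplyInnerSelf v = A.reApplyInnerSelf v - B.reApplyInnerSelf v := by
  simp only [reApplyInnerSelf_apply, sub_apply, inner_sub_left, map_sub]

theorem reApplyInnerSelf_le_opNorm_mul {E : Type*} [NormedAddCommGroup E]
    [InnerProductSpace ℂ E] (A : E →L[ℂ] E) (v : E) :
    A.reApplyInnerSelf v ≤ ‖A‖ * ‖v‖ ^ 2 :=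
  calc A.reApplyInnerSelf v ≤ ‖(inner ℂ (A v) v : ℂ)‖ := RCLike.re_le_norm _
    _ ≤ ‖A v‖ * ‖v‖ := norm_inner_le_norm _ _
    _ ≤ ‖A‖ * ‖v‖ * ‖v‖ := by gcongr; exact A.le_opNorm v
    _ = ‖A‖ * ‖v‖ ^ 2 := by ring

theorem reApplyInnerSelf_star_mul_self {E : Type*} [NormedAddCommGroup E]
    [InnerProductSpace ℂ E] [CompleteSpace E] (A : E →L[ℂ] E) (v : E) :
    (star A * A).reApplyInnerSelf v = ‖A v‖ ^ 2 :=
  (A.apply_norm_sq_eq_inner_adjoint_left v).symm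

theorem mul_inverse_apply_self {𝕜 E : Type*} [NontriviallyNormedField 𝕜] [NormedAddCommGroup E]
    [NormedSpace 𝕜 E] {H : E →L[𝕜] E} (hH : IsUnit H) (K : E →L[𝕜] E) (v : E) :
    (K * Ring.inverse H) (H v) = K v := by
  rw [mul_apply_eq_comp, ← mul_apply_eq_comp (Ring.inverse H),
    Ring.inverse_mul_cancel H hH, one_apply_eq_self]

theorem opNorm_mul_inverse_le {𝕜 E : Type*} [NontriviallyNormedField 𝕜] [NormedAddCommGroup E]
    [NormedSpace 𝕜 E] {H K : E →L[𝕜] E} (hH : IsUnit H) {c : ℝ} (hc : 0 ≤ c)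
    (hKH : ∀ v, ‖K v‖ ≤ c * ‖H v‖) : ‖K * Ring.inverse H‖ ≤ c := by
  refine opNorm_le_bound _ hc fun u => ?_
  have hu : H (Ring.inverse H u) = u := by
    rw [← mul_apply_eq_comp, Ring.mul_inverse_cancel H hH, one_apply_eq_self]
  simpa only [mul_apply_eq_comp, hu] using hKH (Ring.inverse H u)

end ContinuousLinearMap

open ContinuousLinearMap

theorem opLE_iff_forall_reApplyInnerSelf_le {E : Type*} [NormedAddCommGroup E]
    [InnerProductSpace ℂ E] {S T : E →L[ℂ] E} :
    opLE S T ↔ ∀ v, S.reApplyInnerSelf v ≤ T.reApplyInnerSelf v := by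
  simp only [opLE, reApplyInnerSelf_sub, sub_nonneg]

theorem IsPosInv.eventually_reApplyInnerSelf_le_mul {P₀ Q₀ : V →L[ℂ] V} (hP₀ : IsPosInv P₀)
    (hQP : opLE Q₀ P₀) {c : ℝ} (hc : 1 < c) :
    ∀ᶠ p in 𝓝 P₀ ×ˢ 𝓝 Q₀, ∀ v, p.2.reApplyInnerSelf v ≤ c * p.1.reApplyInnerSelf v := by
  obtain ⟨-, ε, hε, hP₀ε⟩ := hP₀
  -- `δ` is chosen so that `(c - 1) (ε - δ) = 2 δ`.
  set δ := (c - 1) * ε / (c + 1)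
  have hδ : 0 < δ := by apply div_pos <;> nlinarith
  have hδε : (c - 1) * (ε - δ) = 2 * δ := by simp only [δ]; field_simp; ring
  filter_upwards [prod_mem_prod (ball_mem_nhds P₀ hδ) (ball_mem_nhds Q₀ hδ)]
  rintro ⟨P, Q⟩ ⟨hP, hQ⟩ v
  rw [mem_ball, dist_eq_norm] at hP hQ
  have hPP₀ := reApplyInnerSelf_le_opNorm_mul (P₀ - P) v
  have hQQ₀ := reApplyInnerSelf_le_opNorm_mul (Q - Q₀) v
  rw [reApplyInnerSelf_sub, norm_sub_rev] at hPP₀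
  rw [reApplyInnerSelf_sub] at hQQ₀
  have hP_low : (ε - δ) * ‖v‖ ^ 2 ≤ P.reApplyInnerSelf v := by nlinarith [hP₀ε v, sq_nonneg ‖v‖]
  have hQ₀P₀ := opLE_iff_forall_reApplyInnerSelf_le.1 hQP v
  nlinarith [mul_le_mul_of_nonneg_left hP_low (by linarith : (0 : ℝ) ≤ c - 1)]

theorem factorized_maximum_principle_general
    (H K PH PK : ℂ → (V →L[ℂ] V))
    (hHdiff : DifferentiableOn ℂ H (ball (0 : ℂ) 1))
    (hHu : ∀ z ∈ ball (0 : ℂ) 1, IsUnit (H z))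
    (hKdiff : DifferentiableOn ℂ K (ball (0 : ℂ) 1))
    (hPHcont : ContinuousOn PH (closedBall (0 : ℂ) 1))
    (hPHpos : ∀ z ∈ closedBall (0 : ℂ) 1, IsPosInv (PH z))
    (hPHeq : ∀ z ∈ ball (0 : ℂ) 1, PH z = star (H z) * H z)
    (hPKcont : ContinuousOn PK (closedBall (0 : ℂ) 1))
    (hPKeq : ∀ z ∈ ball (0 : ℂ) 1, PK z = star (K z) * K z)
    (hbnd : ∀ z ∈ sphere (0 : ℂ) 1, opLE (PK z) (PH z)) :
    ∀ z ∈ ball (0 : ℂ) 1, opLE (star (K z) * K z) (star (H z) * H z) := by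
  set F := fun z => K z * Ring.inverse (H z)
  have hF : DifferentiableOn ℂ F (ball 0 1) := fun z hz =>
    (hKdiff z hz).mul ((hHdiff z hz).inverse (hHu z hz))
  have hF_near : ∀ c > 1, ∀ ζ ∈ frontier (ball (0 : ℂ) 1),
      ∀ᶠ w in 𝓝 ζ, w ∈ ball 0 1 → ‖F w‖ ≤ c := by
    intro c hc ζ hζ
    rw [frontier_ball 0 one_ne_zero] at hζ
    have hζ' := sphere_subset_closedBall hζ
    have hPQ := ((hPHcont ζ hζ').tendsto.prodMk (hPKcont ζ hζ').tendsto).eventually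
      ((hPHpos ζ hζ').eventually_reApplyInnerSelf_le_mul (hbnd ζ hζ) (one_lt_pow₀ hc two_ne_zero))
    filter_upwards [eventually_nhdsWithin_iff.1 hPQ] with w hw hwb
    refine opNorm_mul_inverse_le (hHu w hwb) (by positivity) fun v => ?_
    have hv := hw (ball_subset_closedBall hwb) v
    rw [hPHeq w hwb, hPKeq w hwb, reApplyInnerSelf_star_mul_self, reApplyInnerSelf_star_mul_self,
      ← mul_pow] at hv
    exact (pow_le_pow_iff_left₀ (norm_nonneg _) (by positivity) two_ne_zero).1 hv
  intro z hz
  have hFz : ‖F z‖ ≤ 1 := le_of_forall_gt_imp_ge_of_dense fun c hc =>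
    norm_le_of_eventually_norm_le_near_frontier isBounded_ball isOpen_ball hF (hF_near c hc) hz
  refine opLE_iff_forall_reApplyInnerSelf_le.2 fun v => ?_
  rw [reApplyInnerSelf_star_mul_self, reApplyInnerSelf_star_mul_self]
  gcongr
  calc ‖K z v‖ = ‖F z (H z v)‖ := by rw [mul_inverse_apply_self (hHu z hz)]
    _ ≤ ‖F z‖ * ‖H z v‖ := (F z).le_opNorm _
    _ ≤ ‖H z v‖ := mul_le_of_le_one_left (norm_nonneg _) hFz

/-- Lemma 3.2(b): a maximum principle for flat factorized metrics:
boundary domination `K*K ≤ H*H` propagates to the interior. -/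
theorem factorized_maximum_principle
    (H K PH PK : ℂ → (V →L[ℂ] V))
    (hHdiff : DifferentiableOn ℂ H (ball (0 : ℂ) 1))
    (hHu : ∀ z ∈ ball (0 : ℂ) 1, IsUnit (H z))
    (hKdiff : DifferentiableOn ℂ K (ball (0 : ℂ) 1))
    (hKu : ∀ z ∈ ball (0 : ℂ) 1, IsUnit (K z))
    (hPHcont : ContinuousOn PH (closedBall (0 : ℂ) 1))
    (hPHpos : ∀ z ∈ closedBall (0 : ℂ) 1, IsPosInv (PH z))
    (hPHeq : ∀ z ∈ ball (0 : ℂ) 1, PH z = star (H z) * H z)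
    (hPKcont : ContinuousOn PK (closedBall (0 : ℂ) 1))
    (hPKpos : ∀ z ∈ closedBall (0 : ℂ) 1, IsPosInv (PK z))
    (hPKeq : ∀ z ∈ ball (0 : ℂ) 1, PK z = star (K z) * K z)
    (hbnd : ∀ z ∈ sphere (0 : ℂ) 1, opLE (PK z) (PH z)) :
    ∀ z ∈ ball (0 : ℂ) 1, opLE (star (K z) * K z) (star (H z) * H z) :=
  factorized_maximum_principle_general H K PH PK hHdiff hHu hKdiff hPHcont hPHpos hPHeq hPKcont
    hPKeq hbnd
end
end

section
/- Let V and W be complex Hilbert spaces, A = A* ∈ End V, B ∈ Hom(W,V), and C = C* ∈ End W with C ≥ 0. Let M ∈ End(V ⊕ W) be the block operator M(v,w) = (Av + Bw, B*v + Cw) on the Hilbert space direct sum V ⊕ W. Then the following are equivalent: (1) M ≥ 0; (2) B(t·Id_W + C)⁻¹B* ≤ A for every t ∈ (0,∞); (3) the limit D = lim_{t↘0} B(t·Id_W + C)⁻¹B* exists in the strong operator topology and D ≤ A. -/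
/-!
Write `F t = B (t + C)⁻¹ B*`. Completing the square in the second variable gives, for `t > 0`,
`Re⟪M (v, w), (v, w)⟫ + t ‖w‖² = Re⟪(A - F t) v, v⟫ + Re⟪(t + C) y, y⟫` with
`y = w + (t + C)⁻¹ B* v`. Taking `y = 0` shows `(1) → (2)`; as `t + C ≥ 0`, letting `t → 0` shows
`(2) → (1)`.

Since `(t + C)⁻¹` decreases in `t`, the positive operators `F t` increase as `t ↘ 0`, and under
`(2)` they are bounded by `A`. For a positive `G` one has `‖G v‖² ≤ ‖G‖ Re⟪G v, v⟫`; applied to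
`G = F s - F t ≤ A` it turns convergence of the bounded monotone scalars `Re⟪F t v, v⟫` into
convergence of `F t v`, which gives `(2) → (3)`. Conversely `F t ≤ F s → D` for `s < t`, so
`(3) → (2)`.
-/

open Complex Metric Filter Set ContinuousLinearMap

noncomputable section

variable {V W : Type*} [NormedAddCommGroup V] [InnerProductSpace ℂ V] [CompleteSpace V]
  [NormedAddCommGroup W] [InnerProductSpace ℂ W] [CompleteSpace W]

/-- The block operator `(v, w) ↦ (Av + Bw, B'v + Cw)` on the Hilbert space
direct sum `V ⊕ W`. -/
def blockOp (A : V →L[ℂ] V) (B : W →L[ℂ] V) (B' : V →L[ℂ] W) (C : W →L[ℂ] W) :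
    WithLp 2 (V × W) →L[ℂ] WithLp 2 (V × W) :=
  ((WithLp.prodContinuousLinearEquiv 2 ℂ V W).symm : V × W →L[ℂ] WithLp 2 (V × W)) ∘L
    ((A.coprod B).prod (B'.coprod C)) ∘L
      ((WithLp.prodContinuousLinearEquiv 2 ℂ V W) : WithLp 2 (V × W) →L[ℂ] V × W)

open Topology
open scoped ComplexInnerProductSpace

section LoewnerOrder

variable {E : Type*} [NormedAddCommGroup E] [InnerProductSpace ℂ E]

lemma ContinuousLinearMap.reApplyInnerSelf_sub_s13 (S T : E →L[ℂ] E) (v : E) :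
    (S - T).reApplyInnerSelf v = S.reApplyInnerSelf v - T.reApplyInnerSelf v := by
  simp [reApplyInnerSelf_apply, inner_sub_left]

lemma Filter.Tendsto.reApplyInnerSelf {α : Type*} {l : Filter α} {F : α → E →L[ℂ] E}
    {D : E →L[ℂ] E} {v : E} (h : Tendsto (fun i => F i v) l (𝓝 (D v))) :
    Tendsto (fun i => (F i).reApplyInnerSelf v) l (𝓝 (D.reApplyInnerSelf v)) :=
  (Complex.continuous_re.tendsto _).comp (h.inner tendsto_const_nhds)

lemma opLE_iff {S T : E →L[ℂ] E} :
    opLE S T ↔ ∀ v, S.reApplyInnerSelf v ≤ T.reApplyInnerSelf v := by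
  simp [opLE, reApplyInnerSelf_sub_s13]

lemma opLE_of_le {S T : E →L[ℂ] E} (h : S ≤ T) : opLE S T :=
  ((le_def S T).1 h).2

lemma opLE_iff_le [CompleteSpace E] {S T : E →L[ℂ] E} (hS : IsSelfAdjoint S)
    (hT : IsSelfAdjoint T) : opLE S T ↔ S ≤ T :=
  ⟨fun h => (le_def S T).2 (isPositive_def'.2 ⟨hT.sub hS, h⟩), opLE_of_le⟩

lemma opLE_trans {R S T : E →L[ℂ] E} (hRS : opLE R S) (hST : opLE S T) : opLE R T :=
  opLE_iff.2 fun v => (opLE_iff.1 hRS v).trans (opLE_iff.1 hST v)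

lemma opLE_of_tendsto_left {α : Type*} {l : Filter α} [l.NeBot]
    {F : α → E →L[ℂ] E} {D A : E →L[ℂ] E} (hD : ∀ v, Tendsto (fun i => F i v) l (𝓝 (D v)))
    (hFA : ∀ᶠ i in l, opLE (F i) A) : opLE D A :=
  opLE_iff.2 fun v => le_of_tendsto (hD v).reApplyInnerSelf
    (hFA.mono fun _ h => opLE_iff.1 h v)

lemma opLE_of_tendsto_right {α : Type*} {l : Filter α} [l.NeBot]
    {F : α → E →L[ℂ] E} {D S : E →L[ℂ] E} (hD : ∀ v, Tendsto (fun i => F i v) l (𝓝 (D v)))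
    (hSF : ∀ᶠ i in l, opLE S (F i)) : opLE S D :=
  opLE_iff.2 fun v => ge_of_tendsto (hD v).reApplyInnerSelf
    (hSF.mono fun _ h => opLE_iff.1 h v)

end LoewnerOrder

section MonotoneConvergence

variable {E : Type*} [NormedAddCommGroup E] [InnerProductSpace ℂ E] [CompleteSpace E]

lemma ContinuousLinearMap.norm_apply_sq_le_of_nonneg {G : E →L[ℂ] E} (hG : 0 ≤ G) (v : E) :
    ‖G v‖ ^ 2 ≤ ‖G‖ * G.reApplyInnerSelf v := by
  have hGG : G * G ≤ ‖G‖ • G := by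
    set s := CFC.sqrt G
    have hss : s * s = G := CFC.sqrt_mul_sqrt_self G
    have h := CStarAlgebra.star_left_conjugate_le_norm_smul (a := s) (b := G)
    rw [(CFC.sqrt_nonneg G).isSelfAdjoint.star_eq, hss] at h
    calc G * G = s * (s * s) * s := by rw [← hss]; noncomm_ring
      _ ≤ ‖G‖ • G := by rwa [hss]
  have h := ((le_def _ _).1 hGG).2 v
  have hsymm : ⟪G (G v), v⟫ = ⟪G v, G v⟫ := ((nonneg_iff_isPositive G).1 hG).isSymmetric _ _
  simp only [reApplyInnerSelf_apply, sub_apply, smul_apply, mul_apply_eq_comp, inner_sub_left,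
    hsymm, inner_self_eq_norm_sq_to_K, RCLike.re_to_complex, sub_re, sub_nonneg] at h
  rw [RCLike.real_smul_eq_coe_smul (K := ℂ), inner_smul_left, RCLike.conj_ofReal] at h
  simpa [← Complex.ofReal_pow, reApplyInnerSelf_apply] using h

lemma ContinuousLinearMap.dist_apply_sq_le_of_le {S T : E →L[ℂ] E} (hST : S ≤ T) (v : E) :
    dist (T v) (S v) ^ 2 ≤ ‖T - S‖ * (T.reApplyInnerSelf v - S.reApplyInnerSelf v) := by
  simpa [dist_eq_norm, reApplyInnerSelf_sub_s13] using norm_apply_sq_le_of_nonneg (sub_nonneg.2 hST) v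

variable {F : ℝ → E →L[ℂ] E} {A : E →L[ℂ] E}

lemma cauchy_map_nhdsGT_apply_of_antitoneOn (hF : AntitoneOn F (Ioi 0)) (hF0 : ∀ t > 0, 0 ≤ F t)
    (hFA : ∀ t > 0, F t ≤ A) (v : E) : Cauchy (map (fun t => F t v) (𝓝[>] 0)) := by
  set g : ℝ → ℝ := fun t => (F t).reApplyInnerSelf v
  have hg : Tendsto g (𝓝[>] 0) (𝓝 (sSup (g '' Ioi 0))) :=
    AntitoneOn.tendsto_nhdsGT (fun s hs t ht hst => opLE_iff.1 (opLE_of_le (hF hs ht hst)) v)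
      ⟨A.reApplyInnerSelf v, forall_mem_image.2 fun t ht => opLE_iff.1 (opLE_of_le (hFA t ht)) v⟩
  have hdist_of_le : ∀ s t, 0 < s → s ≤ t → dist (F s v) (F t v) ≤ √(‖A‖ * |g s - g t|) := by
    intro s t hs hst
    have ht := hs.trans_le hst
    have hle := hF hs ht hst
    have hnorm : ‖F s - F t‖ ≤ ‖A‖ := CStarAlgebra.norm_le_norm_of_nonneg_of_le
      (sub_nonneg.2 hle) ((sub_le_self _ (hF0 t ht)).trans (hFA s hs))
    refine Real.le_sqrt_of_sq_le ((dist_apply_sq_le_of_le hle v).trans ?_)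
    exact mul_le_mul hnorm (le_abs_self _)
      (sub_nonneg.2 (opLE_iff.1 (opLE_of_le hle) v)) (norm_nonneg _)
  have hdist : ∀ s t, 0 < s → 0 < t → dist (F s v) (F t v) ≤ √(‖A‖ * |g s - g t|) := by
    intro s t hs ht
    rcases le_total s t with hst | hts
    · exact hdist_of_le s t hs hst
    · rw [dist_comm, abs_sub_comm]
      exact hdist_of_le t s ht hts
  have hsqrt :
      Tendsto (fun p : ℝ × ℝ => √(‖A‖ * |g p.1 - g p.2|)) (𝓝[>] 0 ×ˢ 𝓝[>] 0) (𝓝 0) := by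
    simpa using (((hg.comp tendsto_fst).sub (hg.comp tendsto_snd)).abs.const_mul ‖A‖).sqrt
  refine cauchy_map_iff.2 ⟨inferInstance, tendsto_uniformity_iff_dist_tendsto_zero.2 <|
    squeeze_zero' (Eventually.of_forall fun _ => dist_nonneg) ?_ hsqrt⟩
  filter_upwards [prod_mem_prod self_mem_nhdsWithin self_mem_nhdsWithin] with p hp
  exact hdist p.1 p.2 hp.1 hp.2

theorem exists_tendsto_nhdsGT_apply_of_antitoneOn (hF : AntitoneOn F (Ioi 0))
    (hF0 : ∀ t > 0, 0 ≤ F t) (hFA : ∀ t > 0, F t ≤ A) :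
    ∃ D : E →L[ℂ] E, ∀ v, Tendsto (fun t => F t v) (𝓝[>] 0) (𝓝 (D v)) := by
  have hlim : ∀ v, ∃ y, Tendsto (fun t => F t v) (𝓝[>] 0) (𝓝 y) := fun v =>
    CompleteSpace.complete (cauchy_map_nhdsGT_apply_of_antitoneOn hF hF0 hFA v)
  choose f hf using hlim
  exact ⟨continuousLinearMapOfTendsto F (tendsto_pi_nhds.2 hf), hf⟩

end MonotoneConvergence

lemma blockOp_reApplyInnerSelf_toLp {E F : Type*} [NormedAddCommGroup E] [InnerProductSpace ℂ E]
    [NormedAddCommGroup F] [InnerProductSpace ℂ F] (A : E →L[ℂ] E) (B : F →L[ℂ] E)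
    (B' : E →L[ℂ] F) (C : F →L[ℂ] F) (v : E) (w : F) :
    (blockOp A B B' C).reApplyInnerSelf (WithLp.toLp 2 (v, w)) =
      (⟪A v + B w, v⟫).re + (⟪B' v + C w, w⟫).re := by
  simp [blockOp, reApplyInnerSelf_apply, WithLp.prod_inner_apply, inner_add_left]

lemma IsStrictlyPositive.smul_one_add {𝒜 : Type*} [CStarAlgebra 𝒜] [PartialOrder 𝒜]
    [StarOrderedRing 𝒜] {t : ℝ} (ht : 0 < t) {a : 𝒜} (ha : 0 ≤ a) :
    IsStrictlyPositive (t • (1 : 𝒜) + a) :=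
  (isStrictlyPositive_one.smul ht).add_nonneg ha

section SchurComplement

def schurCorrection (B : W →L[ℂ] V) (C : W →L[ℂ] W) (t : ℝ) : V →L[ℂ] V :=
  B ∘L Ring.inverse (t • (1 : W →L[ℂ] W) + C) ∘L adjoint B

variable {B : W →L[ℂ] V} {C : W →L[ℂ] W}

lemma schurCorrection_nonneg (hC : 0 ≤ C) {t : ℝ} (ht : 0 < t) : 0 ≤ schurCorrection B C t :=
  (nonneg_iff_isPositive _).2 <| ((nonneg_iff_isPositive _).1
    (IsStrictlyPositive.smul_one_add ht hC).ringInverse.nonneg).conj_adjoint B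

lemma schurCorrection_antitoneOn (hC : 0 ≤ C) : AntitoneOn (schurCorrection B C) (Ioi 0) := by
  intro s hs t _ hst
  have hR : Ring.inverse (t • (1 : W →L[ℂ] W) + C) ≤ Ring.inverse (s • 1 + C) :=
    CStarAlgebra.ringInverse_le_ringInverse (by gcongr)
      (IsStrictlyPositive.smul_one_add hs hC)
  rw [ContinuousLinearMap.le_def] at hR ⊢
  simpa [schurCorrection, comp_sub, sub_comp] using hR.conj_adjoint B

lemma blockOp_reApplyInnerSelf_add_mul_norm_sq (hC : 0 ≤ C) {t : ℝ}
    (ht : 0 < t) (A : V →L[ℂ] V) (v : V) (w : W) :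
    (blockOp A B (adjoint B) C).reApplyInnerSelf (WithLp.toLp 2 (v, w)) + t * ‖w‖ ^ 2 =
      (A - schurCorrection B C t).reApplyInnerSelf v +
        (t • (1 : W →L[ℂ] W) + C).reApplyInnerSelf
          (w + Ring.inverse (t • (1 : W →L[ℂ] W) + C) (adjoint B v)) := by
  set K := t • (1 : W →L[ℂ] W) + C
  set u := adjoint B v
  set x := Ring.inverse K u
  have hK : IsStrictlyPositive K := IsStrictlyPositive.smul_one_add ht hC
  have hKx : K x = u := by simpa using congr($(Ring.mul_inverse_cancel K hK.isUnit) u)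
  have hKsymm : ⟪K w, x⟫ = ⟪w, u⟫ := by
    rw [← hKx]; exact hK.nonneg.isSelfAdjoint.isSymmetric w x
  have hB : ⟪B w, v⟫ = ⟪w, u⟫ := (adjoint_inner_right B w v).symm
  have hF : schurCorrection B C t v = B x := rfl
  have hux : (⟪u, x⟫).re = (⟪x, u⟫).re := by rw [← inner_conj_symm, Complex.conj_re]
  have hKw : (⟪K w, w⟫).re = t * ‖w‖ ^ 2 + (⟪C w, w⟫).re := by
    rw [add_apply, smul_apply, one_apply_eq_self, inner_add_left,
      RCLike.real_smul_eq_coe_smul (K := ℂ), inner_smul_left, inner_self_eq_norm_sq_to_K]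
    simp [← Complex.ofReal_pow]
  rw [blockOp_reApplyInnerSelf_toLp]
  simp only [reApplyInnerSelf_apply, sub_apply, map_add, hKx, hF, inner_add_left, inner_add_right,
    inner_sub_left, hKsymm, hB, RCLike.re_to_complex, Complex.add_re, Complex.sub_re,
    ← adjoint_inner_right B x v]
  linarith

lemma blockOp_nonneg_iff (hC : 0 ≤ C) (A : V →L[ℂ] V) :
    (∀ x, 0 ≤ (blockOp A B (adjoint B) C).reApplyInnerSelf x) ↔
      ∀ t > 0, opLE (schurCorrection B C t) A := by
  constructor
  · intro hM t ht v
    set w := -Ring.inverse (t • (1 : W →L[ℂ] W) + C) (adjoint B v)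
    have h0 : (t • (1 : W →L[ℂ] W) + C).reApplyInnerSelf
        (w + Ring.inverse (t • (1 : W →L[ℂ] W) + C) (adjoint B v)) = 0 := by
      simp [w, reApplyInnerSelf_apply]
    linarith [blockOp_reApplyInnerSelf_add_mul_norm_sq (B := B) hC ht A v w,
      hM (WithLp.toLp 2 (v, w)), mul_nonneg ht.le (sq_nonneg ‖w‖)]
  · rintro h ⟨v, w⟩
    set q := (blockOp A B (adjoint B) C).reApplyInnerSelf (WithLp.toLp 2 (v, w))
    have hq_add : ∀ t > 0, 0 ≤ q + t * ‖w‖ ^ 2 := by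
      intro t ht
      rw [blockOp_reApplyInnerSelf_add_mul_norm_sq hC ht]
      exact add_nonneg (h t ht v)
        (((nonneg_iff_isPositive _).1 (IsStrictlyPositive.smul_one_add ht hC).nonneg).2 _)
    have hlim : Tendsto (fun t : ℝ => q + t * ‖w‖ ^ 2) (𝓝[>] 0) (𝓝 q) := by
      have h0 : Tendsto (fun t : ℝ => q + t * ‖w‖ ^ 2) (𝓝 0) (𝓝 (q + 0 * ‖w‖ ^ 2)) :=
        tendsto_const_nhds.add (tendsto_id.mul_const _)
      simpa using h0.mono_left nhdsWithin_le_nhds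
    exact ge_of_tendsto hlim (eventually_nhdsWithin_of_forall hq_add)

lemma exists_tendsto_schurCorrection {A : V →L[ℂ] V} (hA : IsSelfAdjoint A) (hC : 0 ≤ C)
    (h : ∀ t > 0, opLE (schurCorrection B C t) A) :
    ∃ D : V →L[ℂ] V,
      (∀ v, Tendsto (fun t => schurCorrection B C t v) (𝓝[>] 0) (𝓝 (D v))) ∧ opLE D A := by
  have hFA : ∀ t > 0, schurCorrection B C t ≤ A := fun t ht =>
    (opLE_iff_le (schurCorrection_nonneg (B := B) hC ht).isSelfAdjoint hA).1 (h t ht)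
  obtain ⟨D, hD⟩ := exists_tendsto_nhdsGT_apply_of_antitoneOn (schurCorrection_antitoneOn hC)
    (fun _ => schurCorrection_nonneg hC) hFA
  exact ⟨D, hD, opLE_of_tendsto_left hD (eventually_nhdsWithin_of_forall h)⟩

lemma opLE_schurCorrection_of_tendsto {A D : V →L[ℂ] V} (hC : 0 ≤ C)
    (hD : ∀ v, Tendsto (fun t => schurCorrection B C t v) (𝓝[>] 0) (𝓝 (D v)))
    (hDA : opLE D A) {t : ℝ} (ht : 0 < t) : opLE (schurCorrection B C t) A := by
  refine opLE_trans (opLE_of_tendsto_right hD ?_) hDA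
  filter_upwards [Ioo_mem_nhdsGT ht] with s hs
  exact opLE_of_le (schurCorrection_antitoneOn hC hs.1 ht hs.2.le)

end SchurComplement

/-- Lemma 4.3, Schur complements: for `A = A*`, `B`, and
`C = C* ≥ 0`, positivity of the block operator `[[A, B], [B*, C]]` is equivalent
to `B(t·Id + C)⁻¹B* ≤ A` for all `t > 0`, and also to the existence of the
strong-operator-topology limit `D = lim_{t↘0} B(t·Id + C)⁻¹B*` with `D ≤ A`. -/
theorem schur_complement_positivity
    (A : V →L[ℂ] V) (hA : IsSelfAdjoint A)
    (B : W →L[ℂ] V)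
    (C : W →L[ℂ] W) (hC : IsSelfAdjoint C)
    (hC0 : ∀ w : W, 0 ≤ C.reApplyInnerSelf w) :
    ((∀ x : WithLp 2 (V × W),
        0 ≤ (blockOp A B (ContinuousLinearMap.adjoint B) C).reApplyInnerSelf x) ↔
      (∀ t : ℝ, 0 < t →
        opLE (B ∘L Ring.inverse (t • (1 : W →L[ℂ] W) + C) ∘L
          ContinuousLinearMap.adjoint B) A)) ∧
    ((∀ x : WithLp 2 (V × W),
        0 ≤ (blockOp A B (ContinuousLinearMap.adjoint B) C).reApplyInnerSelf x) ↔
      (∃ D : V →L[ℂ] V,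
        (∀ v : V, Tendsto
          (fun t : ℝ => (B ∘L Ring.inverse (t • (1 : W →L[ℂ] W) + C) ∘L
            ContinuousLinearMap.adjoint B) v)
          (nhdsWithin 0 (Ioi (0 : ℝ))) (nhds (D v))) ∧
        opLE D A)) := by
  have hCnonneg : 0 ≤ C := (nonneg_iff_isPositive C).2 (isPositive_def'.2 ⟨hC, hC0⟩)
  have hblock := blockOp_nonneg_iff (B := B) hCnonneg A
  refine ⟨hblock, hblock.trans ⟨exists_tendsto_schurCorrection hA hCnonneg, ?_⟩⟩
  rintro ⟨D, hD, hDA⟩ t ht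
  exact opLE_schurCorrection_of_tendsto hCnonneg hD hDA ht
end
end

section
/- Let V be an infinite-dimensional complex Hilbert space. Then there exists a sequence of holomorphic maps H_k : ℂ → End V, k ∈ ℕ, such that H_k(ζ) is invertible for every ζ ∈ ℂ and every k, H_k(0) = Id, and H_k converges locally uniformly in the operator norm to a holomorphic map H : ℂ → End V for which the set {ζ ∈ ℂ : H(ζ) is invertible} is nonempty but not equal to ℂ. -/
/-!
Kakutani's example. Let `T` be the weighted shift `e n ↦ 2 ^ (-v₂(n + 1)) • e (n + 1)` along an
orthonormal sequence `e`, and `T k` the same shift with the weights at the indices `n` with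
`2 ^ k ∣ n + 1` replaced by `0`. Any `2 ^ k` consecutive weights of `T k` contain a zero, so `T k`
is nilpotent and `1 - ζ • T k` is invertible for every `ζ`. The weights of `T k` and `T` differ by
at most `2 ^ (-k)`, so `T k → T` in norm and `1 - ζ • T k → 1 - ζ • T` locally uniformly. On the
other hand `‖T ^ n (e 0)‖ = 2 ^ (-v₂(n!)) ≥ 2 ^ (-n)`, so by Gelfand's formula the spectral radius
of `T` is at least `1 / 2`, and `1 - z⁻¹ • T` is not invertible for a nonzero `z` in its spectrum.
-/

open Complex Metric Filter Set

noncomputable section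

variable {V : Type*} [NormedAddCommGroup V] [InnerProductSpace ℂ V] [CompleteSpace V]

open scoped InnerProductSpace ENNReal NNReal Topology Nat

theorem norm_mul_sq_le_of_norm_le {𝕜 : Type*} [NormedDivisionRing 𝕜] {a b : 𝕜} {C : ℝ}
    (ha : ‖a‖ ≤ C) : ‖a * b‖ ^ 2 ≤ C ^ 2 * ‖b‖ ^ 2 := by
  rw [norm_mul, mul_pow]
  gcongr

section Orthonormal

variable {𝕜 E ι : Type*} [RCLike 𝕜] [NormedAddCommGroup E] [InnerProductSpace 𝕜 E]
  {f : ι → E} {c : ι → 𝕜}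

theorem Orthonormal.hasSum_norm_sq_tsum (hf : Orthonormal 𝕜 f)
    (hc : Summable fun i => c i • f i) :
    HasSum (fun i => ‖c i‖ ^ 2) (‖∑' i, c i • f i‖ ^ 2) := by
  have h := hf.orthogonalFamily.norm_sum c
  simp only [LinearIsometry.toSpanSingleton_apply] at h
  unfold HasSum
  simp only [← h]
  exact hc.hasSum.norm.pow 2

theorem Orthonormal.inner_tsum_smul (hf : Orthonormal 𝕜 f)
    (hc : Summable fun i => c i • f i) (j : ι) :
    ⟪f j, ∑' i, c i • f i⟫_𝕜 = c j := by
  classical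
  rw [← innerSL_apply_apply, (innerSL 𝕜 (f j)).map_tsum hc, tsum_eq_single j]
  · simp [hf.1 j]
  · intro i hi
    simp [hf.2 hi.symm]

end Orthonormal

section WeightedShift

variable {𝕜 E : Type*} [RCLike 𝕜] [NormedAddCommGroup E] [InnerProductSpace 𝕜 E]
  {e : ℕ → E} {w w' : ℕ → 𝕜} {C C' : ℝ}

def weightedShiftFun (e : ℕ → E) (w : ℕ → 𝕜) (d : ℕ) (x : E) : E :=
  ∑' n, (w n * ⟪e n, x⟫_𝕜) • e (n + d)

theorem Orthonormal.weightedShiftFun_apply_self (he : Orthonormal 𝕜 e) (w : ℕ → 𝕜) (d j : ℕ) :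
    weightedShiftFun e w d (e j) = w j • e (j + d) := by
  classical
  rw [weightedShiftFun, tsum_eq_single j]
  · simp [inner_self_eq_norm_sq_to_K, he.1 j]
  · intro n hn
    simp [he.2 hn]

variable [CompleteSpace E]

theorem Orthonormal.summable_weightedShiftFun (he : Orthonormal 𝕜 e) (hw : ∀ n, ‖w n‖ ≤ C)
    (d : ℕ) (x : E) : Summable fun n => (w n * ⟪e n, x⟫_𝕜) • e (n + d) := by
  have hed : Orthonormal 𝕜 fun n => e (n + d) := he.comp _ (add_left_injective d)
  have := hed.orthogonalFamily.summable_iff_norm_sq_summable fun n => w n * ⟪e n, x⟫_𝕜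
  simp only [LinearIsometry.toSpanSingleton_apply] at this
  exact this.mpr <| .of_nonneg_of_le (fun _ => by positivity)
    (fun n => norm_mul_sq_le_of_norm_le (hw n)) ((he.inner_products_summable x).mul_left _)

theorem Orthonormal.norm_weightedShiftFun_le (he : Orthonormal 𝕜 e) (hw : ∀ n, ‖w n‖ ≤ C)
    (d : ℕ) (x : E) : ‖weightedShiftFun e w d x‖ ≤ C * ‖x‖ := by
  have hC : 0 ≤ C := (norm_nonneg _).trans (hw 0)
  have hed : Orthonormal 𝕜 fun n => e (n + d) := he.comp _ (add_left_injective d)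
  have hsum := hed.hasSum_norm_sq_tsum (he.summable_weightedShiftFun hw d x)
  refine pow_le_pow_iff_left₀ (norm_nonneg _) (by positivity) two_ne_zero |>.mp ?_
  calc ‖weightedShiftFun e w d x‖ ^ 2 = ∑' n, ‖w n * ⟪e n, x⟫_𝕜‖ ^ 2 := hsum.tsum_eq.symm
    _ ≤ ∑' n, C ^ 2 * ‖⟪e n, x⟫_𝕜‖ ^ 2 :=
      hsum.summable.tsum_le_tsum (fun n => norm_mul_sq_le_of_norm_le (hw n))
        ((he.inner_products_summable x).mul_left _)
    _ = C ^ 2 * ∑' n, ‖⟪e n, x⟫_𝕜‖ ^ 2 := tsum_mul_left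
    _ ≤ (C * ‖x‖) ^ 2 := by
      rw [mul_pow]
      gcongr
      exact he.tsum_inner_products_le x

theorem Orthonormal.weightedShiftFun_add (he : Orthonormal 𝕜 e) (hw : ∀ n, ‖w n‖ ≤ C) (d : ℕ)
    (x y : E) :
    weightedShiftFun e w d (x + y) = weightedShiftFun e w d x + weightedShiftFun e w d y := by
  rw [weightedShiftFun, weightedShiftFun, weightedShiftFun,
    ← (he.summable_weightedShiftFun hw d x).tsum_add (he.summable_weightedShiftFun hw d y)]
  simp only [inner_add_right, mul_add, add_smul]

theorem Orthonormal.weightedShiftFun_smul (he : Orthonormal 𝕜 e) (hw : ∀ n, ‖w n‖ ≤ C) (d : ℕ)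
    (a : 𝕜) (x : E) : weightedShiftFun e w d (a • x) = a • weightedShiftFun e w d x := by
  rw [weightedShiftFun, weightedShiftFun,
    ← (he.summable_weightedShiftFun hw d x).tsum_const_smul a]
  simp only [inner_smul_right, smul_smul, mul_left_comm]

theorem Orthonormal.weightedShiftFun_sub_weightedShiftFun (he : Orthonormal 𝕜 e)
    (hw : ∀ n, ‖w n‖ ≤ C) (hw' : ∀ n, ‖w' n‖ ≤ C') (d : ℕ) (x : E) :
    weightedShiftFun e w d x - weightedShiftFun e w' d x = weightedShiftFun e (w - w') d x := by
  rw [weightedShiftFun, weightedShiftFun, weightedShiftFun,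
    ← (he.summable_weightedShiftFun hw d x).tsum_sub (he.summable_weightedShiftFun hw' d x)]
  simp only [Pi.sub_apply, sub_mul, sub_smul]

def Orthonormal.weightedShift (he : Orthonormal 𝕜 e) (hw : ∀ n, ‖w n‖ ≤ C) (d : ℕ) :
    E →L[𝕜] E :=
  LinearMap.mkContinuous
    { toFun := weightedShiftFun e w d
      map_add' := he.weightedShiftFun_add hw d
      map_smul' := he.weightedShiftFun_smul hw d }
    C (he.norm_weightedShiftFun_le hw d)

@[simp]
theorem Orthonormal.weightedShift_apply (he : Orthonormal 𝕜 e) (hw : ∀ n, ‖w n‖ ≤ C) (d : ℕ)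
    (x : E) : he.weightedShift hw d x = weightedShiftFun e w d x :=
  rfl

theorem Orthonormal.norm_weightedShift_sub_le (he : Orthonormal 𝕜 e) (hw : ∀ n, ‖w n‖ ≤ C)
    (hw' : ∀ n, ‖w' n‖ ≤ C') {δ : ℝ} (hδ : ∀ n, ‖w n - w' n‖ ≤ δ) (d : ℕ) :
    ‖he.weightedShift hw d - he.weightedShift hw' d‖ ≤ δ := by
  refine ContinuousLinearMap.opNorm_le_bound _ ((norm_nonneg _).trans (hδ 0)) fun x => ?_
  rw [sub_apply, weightedShift_apply, weightedShift_apply,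
    he.weightedShiftFun_sub_weightedShiftFun hw hw']
  exact he.norm_weightedShiftFun_le hδ d x

theorem Orthonormal.inner_weightedShiftFun_add (he : Orthonormal 𝕜 e) (hw : ∀ n, ‖w n‖ ≤ C)
    (d m : ℕ) (x : E) : ⟪e (m + d), weightedShiftFun e w d x⟫_𝕜 = w m * ⟪e m, x⟫_𝕜 :=
  (he.comp _ (add_left_injective d)).inner_tsum_smul (he.summable_weightedShiftFun hw d x) m

theorem Orthonormal.inner_weightedShiftFun_of_lt (he : Orthonormal 𝕜 e) (hw : ∀ n, ‖w n‖ ≤ C)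
    {d j : ℕ} (hj : j < d) (x : E) : ⟪e j, weightedShiftFun e w d x⟫_𝕜 = 0 := by
  rw [weightedShiftFun, ← innerSL_apply_apply, (innerSL 𝕜 (e j)).map_tsum
    (he.summable_weightedShiftFun hw d x)]
  have horth (n : ℕ) : ⟪e j, e (n + d)⟫_𝕜 = 0 := he.2 (by omega)
  simp [horth]

theorem Orthonormal.weightedShiftFun_weightedShiftFun (he : Orthonormal 𝕜 e)
    (hw' : ∀ n, ‖w' n‖ ≤ C') (d d' : ℕ) (x : E) :
    weightedShiftFun e w d (weightedShiftFun e w' d' x) =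
      weightedShiftFun e (fun n => w' n * w (n + d')) (d' + d) x := by
  rw [weightedShiftFun.eq_1 _ _ (d' + d), weightedShiftFun.eq_1 _ w d,
    ← (add_left_injective d').tsum_eq]
  · refine tsum_congr fun n => ?_
    rw [he.inner_weightedShiftFun_add hw', add_assoc, mul_comm (w _), mul_right_comm]
  · intro n hn
    by_contra hnd
    have hlt : n < d' := by
      by_contra hle
      exact hnd ⟨n - d', Nat.sub_add_cancel (not_lt.mp hle)⟩
    simp [he.inner_weightedShiftFun_of_lt hw' hlt] at hn

theorem Orthonormal.weightedShift_pow_apply (he : Orthonormal 𝕜 e) (hw : ∀ n, ‖w n‖ ≤ C)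
    (m : ℕ) (x : E) : (he.weightedShift hw 1 ^ (m + 1)) x =
      weightedShiftFun e (fun n => ∏ i ∈ Finset.range (m + 1), w (n + i)) (m + 1) x := by
  induction m with
  | zero => simp
  | succ m ih =>
    have hprod (n : ℕ) : ‖∏ i ∈ Finset.range (m + 1), w (n + i)‖ ≤ C ^ (m + 1) := by
      rw [norm_prod]
      exact (Finset.prod_le_prod (fun _ _ => norm_nonneg _) fun _ _ => hw _).trans_eq (by simp)
    rw [pow_succ', ContinuousLinearMap.mul_def, ContinuousLinearMap.comp_apply, ih,
      weightedShift_apply, he.weightedShiftFun_weightedShiftFun hprod]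
    simp only [Finset.prod_range_succ _ (m + 1)]

theorem Orthonormal.prod_norm_le_norm_weightedShift_pow (he : Orthonormal 𝕜 e)
    (hw : ∀ n, ‖w n‖ ≤ C) (m : ℕ) :
    ∏ i ∈ Finset.range (m + 1), ‖w i‖ ≤ ‖he.weightedShift hw 1 ^ (m + 1)‖ := by
  have h := (he.weightedShift hw 1 ^ (m + 1)).le_opNorm (e 0)
  rw [he.weightedShift_pow_apply, he.weightedShiftFun_apply_self, norm_smul, norm_prod,
    he.1, he.1, mul_one, mul_one] at h
  simpa only [zero_add] using h

end WeightedShift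

theorem le_spectralRadius_of_pow_le_nnnorm {A : Type*} [NormedRing A] [NormedAlgebra ℂ A]
    [CompleteSpace A] {a : A} {c : ℝ≥0} (h : ∀ m : ℕ, c ^ (m + 1) ≤ ‖a ^ (m + 1)‖₊) :
    (c : ℝ≥0∞) ≤ spectralRadius ℂ a := by
  refine ge_of_tendsto (spectrum.pow_nnnorm_pow_one_div_tendsto_nhds_spectralRadius a) ?_
  filter_upwards [eventually_ne_atTop 0] with n hn
  obtain ⟨m, rfl⟩ := Nat.exists_eq_add_one_of_ne_zero hn
  calc (c : ℝ≥0∞) = ((c : ℝ≥0∞) ^ (m + 1)) ^ (1 / ((m + 1 : ℕ) : ℝ)) := by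
        rw [one_div, ENNReal.pow_rpow_inv_natCast hn]
    _ ≤ (‖a ^ (m + 1)‖₊ : ℝ≥0∞) ^ (1 / ((m + 1 : ℕ) : ℝ)) := by
        gcongr
        exact_mod_cast h m

theorem exists_ne_zero_mem_spectrum_of_spectralRadius_ne_zero {𝕜 A : Type*} [NormedField 𝕜]
    [Ring A] [Algebra 𝕜 A] {a : A} (ha : spectralRadius 𝕜 a ≠ 0) : ∃ z ∈ spectrum 𝕜 a, z ≠ 0 := by
  by_contra! h
  exact ha (le_zero_iff.mp (iSup₂_le fun z hz => by simp [h z hz]))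

theorem not_isUnit_one_sub_inv_smul_of_mem_spectrum {𝕜 A : Type*} [Field 𝕜] [Ring A]
    [Algebra 𝕜 A] {a : A} {z : 𝕜} (hz : z ∈ spectrum 𝕜 a) (hz0 : z ≠ 0) :
    ¬ IsUnit (1 - z⁻¹ • a) := by
  rw [spectrum.mem_iff, Algebra.algebraMap_eq_smul_one] at hz
  simpa [Units.smul_def] using hz ∘ (IsUnit.smul_sub_iff_sub_inv_smul (Units.mk0 z hz0) a).mpr

theorem tendstoLocallyUniformly_one_sub_smul {𝕜 A ι : Type*} [NontriviallyNormedField 𝕜]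
    [NormedRing A] [NormedAlgebra 𝕜 A] {l : Filter ι} {a : ι → A} {b : A}
    (h : Tendsto a l (𝓝 b)) :
    TendstoLocallyUniformly (fun k (ζ : 𝕜) => 1 - ζ • a k) (fun ζ => 1 - ζ • b) l := by
  have hid : TendstoLocallyUniformly (fun (_ : ι) (ζ : 𝕜) => ζ) id l :=
    TendstoUniformly.tendstoLocallyUniformly fun _ hu =>
      .of_forall fun _ _ => refl_mem_uniformity hu
  exact tendsto_const_nhds.tendstoUniformly_const.tendstoLocallyUniformly.fun_sub
    (hid.fun_smul₀ h.tendstoUniformly_const.tendstoLocallyUniformly continuous_id continuous_const)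

section KakutaniWeight

def kakutaniWeight (n : ℕ) : ℂ :=
  2⁻¹ ^ padicValNat 2 (n + 1)

def truncatedKakutaniWeight (k n : ℕ) : ℂ :=
  if 2 ^ k ∣ n + 1 then 0 else kakutaniWeight n

theorem norm_kakutaniWeight (n : ℕ) : ‖kakutaniWeight n‖ = 2⁻¹ ^ padicValNat 2 (n + 1) := by
  simp [kakutaniWeight]

theorem norm_kakutaniWeight_le_one (n : ℕ) : ‖kakutaniWeight n‖ ≤ 1 := by
  rw [norm_kakutaniWeight]
  exact pow_le_one₀ (by norm_num) (by norm_num)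

theorem norm_truncatedKakutaniWeight_le_one (k n : ℕ) : ‖truncatedKakutaniWeight k n‖ ≤ 1 := by
  unfold truncatedKakutaniWeight
  split_ifs
  · simp
  · exact norm_kakutaniWeight_le_one n

theorem norm_kakutaniWeight_sub_truncatedKakutaniWeight_le (k n : ℕ) :
    ‖kakutaniWeight n - truncatedKakutaniWeight k n‖ ≤ 2⁻¹ ^ k := by
  unfold truncatedKakutaniWeight
  split_ifs with hdvd
  · rw [sub_zero, norm_kakutaniWeight]
    exact pow_le_pow_of_le_one (by norm_num) (by norm_num)
      ((padicValNat_dvd_iff_le n.succ_ne_zero).mp hdvd)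
  · simp

theorem prod_truncatedKakutaniWeight_eq_zero (k n : ℕ) :
    ∏ i ∈ Finset.range (2 ^ k), truncatedKakutaniWeight k (n + i) = 0 := by
  have hmod : n % 2 ^ k < 2 ^ k := Nat.mod_lt n (Nat.two_pow_pos k)
  -- the index `i` with `n + i + 1 = 2 ^ k * (n / 2 ^ k + 1)`
  refine Finset.prod_eq_zero (i := 2 ^ k - 1 - n % 2 ^ k) (Finset.mem_range.mpr (by omega))
    (if_pos ⟨n / 2 ^ k + 1, ?_⟩)
  have := Nat.div_add_mod n (2 ^ k)
  rw [mul_add_one]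
  omega

theorem prod_norm_kakutaniWeight (m : ℕ) :
    ∏ i ∈ Finset.range m, ‖kakutaniWeight i‖ = 2⁻¹ ^ padicValNat 2 m ! := by
  induction m with
  | zero => simp
  | succ m ih =>
    rw [Finset.prod_range_succ, ih, norm_kakutaniWeight, ← pow_add, Nat.factorial_succ,
      padicValNat.mul m.succ_ne_zero (Nat.factorial_ne_zero m), add_comm]

theorem two_inv_pow_le_prod_norm_kakutaniWeight (m : ℕ) :
    (2⁻¹ : ℝ) ^ m ≤ ∏ i ∈ Finset.range m, ‖kakutaniWeight i‖ := by
  rw [prod_norm_kakutaniWeight]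
  refine pow_le_pow_of_le_one (by norm_num) (by norm_num) ?_
  have := sub_one_mul_padicValNat_factorial (p := 2) m
  omega

end KakutaniWeight

section KakutaniShift

variable {E : Type*} [NormedAddCommGroup E] [InnerProductSpace ℂ E] [CompleteSpace E]
  {e : ℕ → E}

abbrev Orthonormal.kakutaniShift (he : Orthonormal ℂ e) : E →L[ℂ] E :=
  he.weightedShift norm_kakutaniWeight_le_one 1

abbrev Orthonormal.truncatedKakutaniShift (he : Orthonormal ℂ e) (k : ℕ) : E →L[ℂ] E :=
  he.weightedShift (norm_truncatedKakutaniWeight_le_one k) 1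

theorem Orthonormal.isNilpotent_truncatedKakutaniShift (he : Orthonormal ℂ e) (k : ℕ) :
    IsNilpotent (he.truncatedKakutaniShift k) := by
  obtain ⟨m, hm⟩ := Nat.exists_eq_add_one_of_ne_zero (Nat.two_pow_pos k).ne'
  refine ⟨m + 1, ContinuousLinearMap.ext fun x => ?_⟩
  rw [he.weightedShift_pow_apply, ← hm]
  simp [prod_truncatedKakutaniWeight_eq_zero, weightedShiftFun]

theorem Orthonormal.tendsto_truncatedKakutaniShift (he : Orthonormal ℂ e) :
    Tendsto he.truncatedKakutaniShift atTop (𝓝 he.kakutaniShift) := by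
  refine tendsto_iff_norm_sub_tendsto_zero.mpr <| squeeze_zero (fun _ => norm_nonneg _)
    (fun k => he.norm_weightedShift_sub_le _ _ (fun n => ?_) 1)
    (tendsto_pow_atTop_nhds_zero_of_lt_one (by norm_num) (by norm_num : (2⁻¹ : ℝ) < 1))
  rw [norm_sub_rev]
  exact norm_kakutaniWeight_sub_truncatedKakutaniWeight_le k n

theorem Orthonormal.two_inv_le_spectralRadius_kakutaniShift (he : Orthonormal ℂ e) :
    ((2⁻¹ : ℝ≥0) : ℝ≥0∞) ≤ spectralRadius ℂ he.kakutaniShift := by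
  refine le_spectralRadius_of_pow_le_nnnorm fun m => ?_
  rw [← NNReal.coe_le_coe, NNReal.coe_pow, coe_nnnorm]
  exact (two_inv_pow_le_prod_norm_kakutaniWeight (m + 1)).trans_eq' (by simp) |>.trans
    (he.prod_norm_le_norm_weightedShift_pow _ m)

end KakutaniShift

theorem exists_orthonormal_nat_of_not_finiteDimensional {𝕜 E : Type*} [RCLike 𝕜]
    [NormedAddCommGroup E] [InnerProductSpace 𝕜 E] [CompleteSpace E]
    (hE : ¬ FiniteDimensional 𝕜 E) : ∃ e : ℕ → E, Orthonormal 𝕜 e := by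
  obtain ⟨s, b, -⟩ := exists_hilbertBasis 𝕜 E
  have : Infinite s := by
    by_contra hfin
    have : Fintype s := @Fintype.ofFinite _ (not_infinite_iff_finite.mp hfin)
    exact hE (Module.Finite.of_basis b.toOrthonormalBasis.toBasis)
  exact ⟨b ∘ Infinite.natEmbedding s, b.orthonormal.comp _ (Infinite.natEmbedding s).injective⟩

/-- Lemma 5.2: failure of Hurwitz's theorem in infinite rank:
there is a sequence of entire, everywhere invertible, operator-valued maps
`H_k` with `H_k(0) = Id`, converging locally uniformly in operator norm to an
entire map `H` whose set of invertibility is nonempty but not all of `ℂ`. -/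
theorem hurwitz_fails_infinite_rank
    (hV : ¬ FiniteDimensional ℂ V) :
    ∃ H : ℕ → ℂ → (V →L[ℂ] V), ∃ Hlim : ℂ → (V →L[ℂ] V),
      (∀ k, Differentiable ℂ (H k)) ∧
      (∀ k, ∀ ζ : ℂ, IsUnit (H k ζ)) ∧
      (∀ k, H k 0 = 1) ∧
      Differentiable ℂ Hlim ∧
      TendstoLocallyUniformly (fun k => H k) Hlim atTop ∧
      {ζ : ℂ | IsUnit (Hlim ζ)}.Nonempty ∧
      {ζ : ℂ | IsUnit (Hlim ζ)} ≠ univ := by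
  obtain ⟨e, he⟩ := exists_orthonormal_nat_of_not_finiteDimensional hV
  obtain ⟨z, hz, hz0⟩ := exists_ne_zero_mem_spectrum_of_spectralRadius_ne_zero
    (ne_bot_of_le_ne_bot (by simp) he.two_inv_le_spectralRadius_kakutaniShift)
  refine ⟨fun k ζ => 1 - ζ • he.truncatedKakutaniShift k, fun ζ => 1 - ζ • he.kakutaniShift,
    fun k => by fun_prop,
    fun k ζ => ((he.isNilpotent_truncatedKakutaniShift k).smul ζ).isUnit_one_sub,
    fun k => by simp, by fun_prop,
    tendstoLocallyUniformly_one_sub_smul he.tendsto_truncatedKakutaniShift, ⟨0, by simp⟩,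
    fun h => not_isUnit_one_sub_inv_smul_of_mem_spectrum hz hz0 (eq_univ_iff_forall.mp h z⁻¹)⟩
end
end
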